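/- arXiv:0708.2987 — 7 statements merged into one kernel-verified Lean document; each statement's English description precedes it below -/
import Mathlib

section
/- Let p > 3 be prime and let x₁, x₂ be residues mod p with x₁ ≢ x₂ (mod p). Then the double sum over α, β mod p of (Legendre symbol of (x₁³ + α·x₁ + β) mod p) times (Legendre symbol of (x₂³ + α·x₂ + β) mod p) equals 0. -/
/-!
Since `x₁ ≠ x₂`, the map `(α, β) ↦ (x₁³ + αx₁ + β, x₂³ + αx₂ + β)` is an affine bijection of
`𝔽ₚ²`, so the double sum factors as `(∑ᵤ (u/p)) · (∑ᵥ (v/p))`, and each factor vanishes.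
-/

theorem injective_affine_pair {R : Type*} [CommRing R] [NoZeroDivisors R] {x₁ x₂ : R}
    (hx : x₁ ≠ x₂) (c₁ c₂ : R) :
    Function.Injective fun ab : R × R => (c₁ + ab.1 * x₁ + ab.2, c₂ + ab.1 * x₂ + ab.2) := by
  rintro ⟨α, β⟩ ⟨α', β'⟩ h
  simp only [Prod.mk.injEq] at h
  obtain ⟨h₁, h₂⟩ := h
  have hα : α = α' := by
    have : (α - α') * (x₁ - x₂) = 0 := by linear_combination h₁ - h₂
    simpa [sub_eq_zero, hx] using this
  subst hα
  simpa using h₁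

theorem sum_sum_mul_affine_pair {R S : Type*} [CommRing R] [NoZeroDivisors R] [Fintype R]
    [CommSemiring S] {x₁ x₂ : R} (hx : x₁ ≠ x₂) (c₁ c₂ : R) (f g : R → S) :
    ∑ α : R, ∑ β : R, f (c₁ + α * x₁ + β) * g (c₂ + α * x₂ + β) =
      (∑ u : R, f u) * ∑ v : R, g v := by
  rw [Finset.sum_mul_sum, ← Fintype.sum_prod_type', ← Fintype.sum_prod_type']
  exact Fintype.sum_bijective _ ((injective_affine_pair hx c₁ c₂).bijective_of_finite) _ _
    fun _ => rfl

theorem legendre_double_sum_vanishes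
    (p : ℕ) [Fact p.Prime] (hp : 3 < p) (x₁ x₂ : ℤ)
    (h : ¬ ((x₁ : ZMod p) = (x₂ : ZMod p))) :
    ∑ α : ZMod p, ∑ β : ZMod p,
      legendreSym p (x₁ ^ 3 + (α.val : ℤ) * x₁ + (β.val : ℤ)) *
        legendreSym p (x₂ ^ 3 + (α.val : ℤ) * x₂ + (β.val : ℤ)) = 0 := by
  have hchar : ringChar (ZMod p) ≠ 2 := by rw [ZMod.ringChar_zmod_n]; omega
  have hcast (x : ℤ) (α β : ZMod p) :
      ((x ^ 3 + (α.val : ℤ) * x + (β.val : ℤ) : ℤ) : ZMod p) = (x : ZMod p) ^ 3 + α * x + β := by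
    push_cast [ZMod.natCast_val, ZMod.cast_id']
    rfl
  simp only [legendreSym, hcast]
  rw [sum_sum_mul_affine_pair h, quadraticChar_sum_zero hchar, zero_mul]
end

section
/- Let p > 3 be prime and for integers a, b define λ_{a,b}(p) = -∑_{x mod p} ((x³+ax+b)/p), where (·/p) is the Legendre symbol. Then ∑_{α mod p} ∑_{β mod p} λ_{α,β}(p)² = p²(p-1). -/
/-!
Expanding the square and summing over `β` first leaves the correlations
`∑ β, χ (u + β) * χ (v + β)` of the quadratic character `χ`, which are `p - 1` for `u = v`
and, being a Jacobi sum in disguise, `-1` otherwise. The total therefore only depends on how often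
`x³ + αx = y³ + αy`: always when `x = y`, and for exactly one `α` when `x ≠ y`.
-/

open Finset

namespace MulChar

variable {F R : Type*} [Field F] [Fintype F] [CommRing R]

lemma sum_mul_inv_add_self (χ : MulChar F R) (u : F) :
    ∑ β : F, χ (u + β) * χ⁻¹ (u + β) = Fintype.card F - 1 := by
  classical
  refine (Fintype.sum_equiv (Equiv.addLeft u) _ (fun x ↦ (χ * χ⁻¹) x) fun _ ↦ rfl).trans ?_
  rw [mul_inv_cancel, sum_one_eq_card_units, Fintype.card_eq_card_units_add_one (α := F)]
  push_cast; ring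

variable [IsDomain R]

lemma sum_mul_inv_add_of_ne {χ : MulChar F R} (hχ : χ ≠ 1) {u v : F} (huv : u ≠ v) :
    ∑ β : F, χ (u + β) * χ⁻¹ (v + β) = -1 := by
  have hc : v - u ≠ 0 := sub_ne_zero.mpr huv.symm
  have hunit : χ (v - u) * χ⁻¹ (v - u) = 1 := by
    rw [← mul_apply, mul_inv_cancel, one_apply (isUnit_iff_ne_zero.mpr hc)]
  -- the substitution `β = -(v - u) x - u` turns the sum into `χ (-1)` times a Jacobi sum
  have hsub : ∑ β : F, χ (u + β) * χ⁻¹ (v + β) = χ (-1) * jacobiSum χ χ⁻¹ := by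
    rw [jacobiSum, mul_sum]
    symm
    refine Fintype.sum_bijective (fun x ↦ -(v - u) * x - u) ?_ _ _ fun x ↦ ?_
    · exact (Equiv.subRight u).bijective.comp (mulLeft_bijective₀ _ (neg_ne_zero.mpr hc))
    · rw [show u + (-(v - u) * x - u) = -1 * (v - u) * x by ring,
        show v + (-(v - u) * x - u) = (v - u) * (1 - x) by ring, map_mul, map_mul, map_mul]
      linear_combination -(χ (-1) * χ x * χ⁻¹ (1 - x)) * hunit
  rw [hsub, jacobiSum_nontrivial_inv hχ, mul_neg, ← map_mul, neg_one_mul, neg_neg, map_one]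

lemma sum_mul_inv_add [DecidableEq F] {χ : MulChar F R} (hχ : χ ≠ 1) (u v : F) :
    ∑ β : F, χ (u + β) * χ⁻¹ (v + β)
      = if u = v then (Fintype.card F : R) - 1 else -1 := by
  split_ifs with huv
  · exact huv ▸ sum_mul_inv_add_self χ u
  · exact sum_mul_inv_add_of_ne hχ huv

end MulChar

section QuadraticChar

variable {F : Type*} [Field F] [Fintype F] [DecidableEq F]

lemma quadraticChar_sum_mul_add (hF : ringChar F ≠ 2) (u v : F) :
    ∑ β : F, quadraticChar F (u + β) * quadraticChar F (v + β)
      = if u = v then (Fintype.card F : ℤ) - 1 else -1 := by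
  conv_lhs => enter [2, β, 2]; rw [← (quadraticChar_isQuadratic F).inv]
  exact MulChar.sum_mul_inv_add (quadraticChar_ne_one hF) u v

lemma quadraticChar_sum_sq_sum_add {ι : Type*} [Fintype ι] (hF : ringChar F ≠ 2)
    (f : ι → F) :
    ∑ β : F, (∑ i, quadraticChar F (f i + β)) ^ 2
      = ∑ i, ∑ j, if f i = f j then (Fintype.card F : ℤ) - 1 else -1 := by
  simp_rw [sq, sum_mul_sum]
  rw [sum_comm]
  refine sum_congr rfl fun i _ ↦ ?_
  rw [sum_comm]
  exact sum_congr rfl fun j _ ↦ quadraticChar_sum_mul_add hF _ _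

end QuadraticChar

lemma sum_ite_cube_add_mul_eq {F : Type*} [Field F] [Fintype F] [DecidableEq F] (x y : F) :
    ∑ α : F, (if x ^ 3 + α * x = y ^ 3 + α * y then (Fintype.card F : ℤ) - 1 else -1)
      = if x = y then (Fintype.card F : ℤ) * (Fintype.card F - 1) else 0 := by
  split_ifs with hxy
  · simp only [hxy, ↓reduceIte, sum_sub_distrib, sum_const, card_univ, Int.nsmul_eq_mul, mul_one]
    ring
  · have hiff : ∀ α : F, x ^ 3 + α * x = y ^ 3 + α * y ↔ α = -(x ^ 2 + x * y + y ^ 2) := by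
      intro α
      have hfactor :
          x ^ 3 + α * x = y ^ 3 + α * y ↔ (x - y) * (α + (x ^ 2 + x * y + y ^ 2)) = 0 :=
        ⟨fun h ↦ by linear_combination h, fun h ↦ by linear_combination h⟩
      rw [hfactor, mul_eq_zero, sub_eq_zero, or_iff_right hxy, add_eq_zero_iff_eq_neg]
    simp_rw [hiff]
    simp [sum_ite, filter_eq', filter_ne', Nat.cast_sub Fintype.card_pos]

theorem lambda_square_average
    (p : ℕ) [Fact p.Prime] (hp : 3 < p) :
    ∑ α : ZMod p, ∑ β : ZMod p,
      (-(∑ x : ZMod p,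
          legendreSym p ((x.val : ℤ) ^ 3 + (α.val : ℤ) * (x.val : ℤ) + (β.val : ℤ)))) ^ 2
      = (p : ℤ) ^ 2 * ((p : ℤ) - 1) := by
  have hF : ringChar (ZMod p) ≠ 2 := by rw [ZMod.ringChar_zmod_n]; omega
  have hlegendre : ∀ α β x : ZMod p,
      legendreSym p ((x.val : ℤ) ^ 3 + (α.val : ℤ) * (x.val : ℤ) + (β.val : ℤ))
        = quadraticChar (ZMod p) (x ^ 3 + α * x + β) := fun α β x ↦ by
    simp [legendreSym]
  have hcard : Fintype.card (ZMod p) = p := ZMod.card p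
  simp_rw [hlegendre, neg_sq]
  calc _ = ∑ α : ZMod p, ∑ x : ZMod p, ∑ y : ZMod p,
          if x ^ 3 + α * x = y ^ 3 + α * y then (Fintype.card (ZMod p) : ℤ) - 1 else -1 :=
        sum_congr rfl fun α _ ↦ quadraticChar_sum_sq_sum_add hF fun x ↦ x ^ 3 + α * x
    _ = ∑ x : ZMod p, ∑ y : ZMod p, ∑ α : ZMod p,
          if x ^ 3 + α * x = y ^ 3 + α * y then (Fintype.card (ZMod p) : ℤ) - 1 else -1 := by
        rw [sum_comm]
        exact sum_congr rfl fun _ _ ↦ sum_comm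
    _ = ∑ x : ZMod p, ∑ y : ZMod p,
          if x = y then (Fintype.card (ZMod p) : ℤ) * (Fintype.card (ZMod p) - 1) else 0 := by
        simp_rw [sum_ite_cube_add_mul_eq]
    _ = _ := by
        simp only [sum_ite_eq, mem_univ, if_true, sum_const, card_univ, nsmul_eq_mul, hcard]
        ring
end

section
/- For any natural number n ≥ 2, the sum of (log p)/p over primes p dividing n is O(log log n), i.e., there is an absolute constant C such that ∑_{p | n} (log p)/p ≤ C · log log n for all n ≥ 3. -/
/-!
Split the prime divisors of `n` at `log n`. Since the product of the prime divisors divides `n`,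
their logarithms sum to at most `log n`, so the primes above `log n` contribute at most `1`.
The primes up to `log n` contribute at most `∑_{p ≤ log n} log p / p`, which is
`O(log log n)` by partial summation against Chebyshev's bound `θ(x) ≤ x log 4`.
-/

open Finset Real

theorem one_lt_log_three : 1 < log 3 :=
  lt_trans (by norm_num) log_three_gt_d9

theorem inv_succ_le_log_succ_sub_log {x : ℝ} (hx : 0 < x) :
    1 / (x + 1) ≤ log (x + 1) - log x := by
  have h := one_sub_inv_le_log_of_pos (div_pos (by linarith) hx : 0 < (x + 1) / x)
  rw [log_div (by linarith) hx.ne', inv_div] at h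
  calc 1 / (x + 1) = 1 - x / (x + 1) := by field_simp; ring
    _ ≤ _ := h

theorem div_sub_div_succ_le_mul_log {A c x : ℝ} (hc : 0 ≤ c) (hx : 0 < x) (hA : A ≤ c * x) :
    A / x - A / (x + 1) ≤ c * (log (x + 1) - log x) :=
  calc A / x - A / (x + 1) = A / x / (x + 1) := by field_simp; ring
    _ ≤ c / (x + 1) := by gcongr; rwa [div_le_iff₀ hx]
    _ = c * (1 / (x + 1)) := by ring
    _ ≤ c * (log (x + 1) - log x) := by gcongr; exact inv_succ_le_log_succ_sub_log hx

theorem sum_Icc_div_le_of_sum_Icc_le {a : ℕ → ℝ} {c : ℝ} (hc : 0 ≤ c)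
    (ha : ∀ N, ∑ k ∈ Icc 1 N, a k ≤ c * N) (N : ℕ) :
    ∑ k ∈ Icc 1 N, a k / k ≤ c * (1 + log N) := by
  -- partial summation: `∑_{k ≤ N} a k / k - A N / N - c log N` is nonincreasing in `N ≥ 1`
  suffices h : ∀ N, 1 ≤ N → ∑ k ∈ Icc 1 N, a k / k ≤ (∑ k ∈ Icc 1 N, a k) / N + c * log N by
    rcases Nat.eq_zero_or_pos N with rfl | hN
    · simpa using hc
    have hN' : (0 : ℝ) < N := by exact_mod_cast hN
    calc _ ≤ (∑ k ∈ Icc 1 N, a k) / N + c * log N := h N hN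
      _ ≤ c + c * log N := by gcongr; rw [div_le_iff₀ hN']; exact ha N
      _ = c * (1 + log N) := by ring
  intro N hN
  induction N, hN using Nat.le_induction with
  | base => simp
  | succ N hN ih =>
    have hN' : (0 : ℝ) < N := by exact_mod_cast hN
    have hstep := div_sub_div_succ_le_mul_log hc hN' (ha N)
    rw [sum_Icc_succ_top (by omega), sum_Icc_succ_top (by omega)]
    push_cast
    have hsplit : (∑ k ∈ Icc 1 N, a k + a (N + 1)) / (N + 1) =
        (∑ k ∈ Icc 1 N, a k) / (N + 1) + a (N + 1) / (N + 1) := add_div _ _ _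
    linarith

theorem sum_primesLE_log_div_le (N : ℕ) :
    ∑ p ∈ Nat.primesLE N, log p / p ≤ log 4 * (1 + log N) := by
  have hθ (M : ℕ) : ∑ k ∈ Icc 1 M, (if k.Prime then log k else 0) ≤ log 4 * M := by
    rw [← sum_filter, ← Nat.primesLE_eq_filter_Icc_one, ← Chebyshev.theta_eq_sum_primesLE_log]
    exact Chebyshev.theta_le_log4_mul_x M.cast_nonneg
  have := sum_Icc_div_le_of_sum_Icc_le (log_pos (by norm_num : (1 : ℝ) < 4)).le hθ N
  simpa only [ite_div, zero_div, ← sum_filter, ← Nat.primesLE_eq_filter_Icc_one] using this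

theorem sum_primeFactors_log_le (n : ℕ) : ∑ p ∈ n.primeFactors, log p ≤ log n := by
  rcases Nat.eq_zero_or_pos n with rfl | hn
  · simp
  have hprod : 0 < ∏ p ∈ n.primeFactors, p :=
    prod_pos fun p hp => (Nat.prime_of_mem_primeFactors hp).pos
  rw [← log_prod fun p hp => by exact_mod_cast (Nat.prime_of_mem_primeFactors hp).ne_zero,
    ← Nat.cast_prod]
  exact log_le_log (by exact_mod_cast hprod)
    (by exact_mod_cast Nat.le_of_dvd hn n.prod_primeFactors_dvd)

theorem sum_primeFactors_log_div_le (n M : ℕ) :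
    ∑ p ∈ n.primeFactors, log p / p ≤ ∑ p ∈ Nat.primesLE M, log p / p + log n / (M + 1) := by
  have hlog : ∀ p ∈ n.primeFactors, 0 ≤ log p := fun p _ => log_natCast_nonneg p
  rw [← sum_filter_add_sum_filter_not n.primeFactors (· ≤ M)]
  gcongr
  · intro p hp
    simp only [mem_filter, Nat.mem_primeFactors] at hp
    exact Nat.mem_primesLE.2 ⟨hp.2, hp.1.1⟩
  · calc ∑ p ∈ n.primeFactors with ¬p ≤ M, log p / p
        ≤ ∑ p ∈ n.primeFactors with ¬p ≤ M, log p / (M + 1) := by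
          refine sum_le_sum fun p hp => ?_
          simp only [mem_filter, not_le] at hp
          gcongr
          exact_mod_cast hp.2
      _ = (∑ p ∈ n.primeFactors with ¬p ≤ M, log p) / (M + 1) := (sum_div ..).symm
      _ ≤ log n / (M + 1) := by
          gcongr
          exact (sum_le_sum_of_subset_of_nonneg (filter_subset _ _) fun p hp _ => hlog p hp).trans
            (sum_primeFactors_log_le n)

theorem sum_primeFactors_log_div_le_log_log (n : ℕ) (hn : 3 ≤ n) :
    ∑ p ∈ n.primeFactors, log p / p ≤ log 4 * log (log n) + (1 + log 4) := by
  set L := log n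
  have hL : 1 < L := calc
    (1 : ℝ) < log 3 := one_lt_log_three
    _ ≤ L := log_le_log (by norm_num) (by exact_mod_cast hn)
  have hM : (0 : ℝ) < ⌊L⌋₊ := by exact_mod_cast Nat.floor_pos.2 hL.le
  calc ∑ p ∈ n.primeFactors, log p / p
      ≤ log 4 * (1 + log ⌊L⌋₊) + L / (⌊L⌋₊ + 1) :=
        (sum_primeFactors_log_div_le n _).trans (by gcongr; exact sum_primesLE_log_div_le _)
    _ ≤ log 4 * (1 + log L) + 1 := by
        gcongr
        · exact Nat.floor_le (by linarith)
        · rw [div_le_one (by positivity)]; exact (Nat.lt_floor_add_one L).le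
    _ = log 4 * log L + (1 + log 4) := by ring

theorem sum_log_div_p_over_prime_divisors :
    ∃ C : ℝ, 0 < C ∧ ∀ n : ℕ, 3 ≤ n →
      ∑ p ∈ n.primeFactors, Real.log p / p ≤ C * Real.log (Real.log n) := by
  have h4 : 0 < log 4 := log_pos (by norm_num)
  have hb : 0 < log (log 3) := log_pos one_lt_log_three
  refine ⟨log 4 + (1 + log 4) / log (log 3), by positivity, fun n hn => ?_⟩
  have hlog3 : log (log 3) ≤ log (log n) :=
    log_le_log (zero_lt_one.trans one_lt_log_three)
      (log_le_log (by norm_num) (by exact_mod_cast hn))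
  have hconst : 1 + log 4 ≤ (1 + log 4) / log (log 3) * log (log n) := by
    rw [div_mul_eq_mul_div, le_div_iff₀ hb]; gcongr
  linarith [sum_primeFactors_log_div_le_log_log n hn]
end

section
/- Let l be a natural number, a an integer coprime to l, and k any integer. Then |∑_{b mod l} e((ab² + kb)/l)| ≤ 2√l. -/
/-!
Squaring out the sum and substituting `x = y + h` gives
`|S|² = ∑_h ψ(a h² + k h) ∑_y ψ(2 a h y)`; by orthogonality the inner sum is `l` when
`2 a h = 0` and vanishes otherwise. As `a` is a unit modulo `l`, at most two residues `h`
satisfy `2 a h = 0`, so `|S|² ≤ 2 l ≤ (2 √l)²`.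
-/

open Complex Finset ComplexConjugate

namespace AddChar

variable {R K : Type*} [CommRing R] [Fintype R] [DecidableEq R] [RCLike K] {ψ : AddChar R K}

theorem sum_quadratic_mul_conj (hψ : ψ.IsPrimitive) (a k : R) :
    (∑ x, ψ (a * x ^ 2 + k * x)) * conj (∑ x, ψ (a * x ^ 2 + k * x)) =
      Fintype.card R * ∑ h with 2 * a * h = 0, ψ (a * h ^ 2 + k * h) := by
  calc (∑ x, ψ (a * x ^ 2 + k * x)) * conj (∑ y, ψ (a * y ^ 2 + k * y))
      = ∑ y, ∑ x, ψ (a * x ^ 2 + k * x - (a * y ^ 2 + k * y)) := by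
        simp_rw [map_sum, sum_mul_sum, ← map_neg_eq_conj, ← map_add_eq_mul, sub_eq_add_neg]
        exact sum_comm
    _ = ∑ y, ∑ h, ψ (a * h ^ 2 + k * h) * ψ (y * (2 * a * h)) := by
        refine sum_congr rfl fun y _ => ?_
        rw [← Equiv.sum_comp (Equiv.addRight y)]
        refine sum_congr rfl fun h _ => ?_
        rw [Equiv.coe_addRight, ← map_add_eq_mul]
        ring_nf
    _ = ∑ h, ψ (a * h ^ 2 + k * h) * ∑ y, ψ (y * (2 * a * h)) := by
        rw [sum_comm]
        simp_rw [mul_sum]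
    _ = Fintype.card R * ∑ h with 2 * a * h = 0, ψ (a * h ^ 2 + k * h) := by
        simp_rw [sum_mulShift _ hψ, apply_ite Nat.cast, Nat.cast_zero, mul_ite, mul_zero,
          ← sum_filter, mul_sum, mul_comm]

theorem norm_sum_quadratic_sq_le (hψ : ψ.IsPrimitive) (a k : R) :
    ‖∑ x, ψ (a * x ^ 2 + k * x)‖ ^ 2 ≤ Fintype.card R * #{h | 2 * a * h = 0} := by
  rw [sq]
  nth_rw 2 [← RCLike.norm_conj]
  rw [← norm_mul, sum_quadratic_mul_conj hψ, norm_mul, RCLike.norm_natCast]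
  gcongr
  calc _ ≤ ∑ h with 2 * a * h = 0, ‖ψ (a * h ^ 2 + k * h)‖ := norm_sum_le _ _
    _ = _ := by simp [norm_apply]

end AddChar

theorem ZMod.card_two_mul_mul_eq_zero_le {l : ℕ} [NeZero l] {a : ZMod l} (ha : IsUnit a) :
    #{h : ZMod l | 2 * a * h = 0} ≤ 2 := by
  classical
  rw [filter_congr fun h _ => show 2 * a * h = 0 ↔ 2 • h = 0 by
    rw [nsmul_eq_mul, Nat.cast_ofNat, mul_right_comm, mul_comm, ha.mul_right_eq_zero]]
  exact IsAddCyclic.card_nsmul_eq_zero_le two_pos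

theorem quadratic_gauss_sum_bound
    (l : ℕ) [NeZero l] (a k : ℤ) (ha : IsCoprime a (l : ℤ)) :
    ‖∑ b : ZMod l,
        Complex.exp (2 * Real.pi * I * (a * (b.val : ℂ) ^ 2 + k * (b.val : ℂ)) / l)‖
      ≤ 2 * Real.sqrt l := by
  have hsummand (b : ZMod l) :
      exp (2 * Real.pi * I * (a * (b.val : ℂ) ^ 2 + k * (b.val : ℂ)) / l) =
        ZMod.stdAddChar (a * b ^ 2 + k * b : ZMod l) := by
    rw [show (a * b ^ 2 + k * b : ZMod l) = ((a * b.val ^ 2 + k * b.val : ℤ) : ZMod l) by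
      push_cast; rw [ZMod.natCast_zmod_val], ZMod.stdAddChar_coe]
    push_cast
    rfl
  have hunit : IsUnit (a : ZMod l) := (ZMod.coe_int_isUnit_iff_isCoprime a l).mpr ha.symm
  have hsq := AddChar.norm_sum_quadratic_sq_le (ZMod.isPrimitive_stdAddChar l) (a : ZMod l) k
  have hcard : (#{h : ZMod l | 2 * (a : ZMod l) * h = 0} : ℝ) ≤ 2 := by
    exact_mod_cast ZMod.card_two_mul_mul_eq_zero_le hunit
  simp_rw [hsummand]
  refine le_of_pow_le_pow_left₀ two_ne_zero (by positivity) ?_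
  rw [mul_pow, Real.sq_sqrt l.cast_nonneg]
  rw [ZMod.card] at hsq
  nlinarith
end

section
/- The multiplicative sum ∑_{d ≤ D} d/(d⁴)₀ is O(D^ε) for every ε > 0, where for a natural number n, n₀ denotes the least natural number m with n | m³. -/
/-!
Write the exponent of a prime `p` in `d` as `3k + r` with `r ∈ {0, 1, 2}`. Collecting the primes
with `r = 1`, those with `r = 2`, and the powers `p ^ k` gives `d = s t² c³` with `s`, `t`
squarefree. If `d⁴ ∣ m³`, the exponent of `p` in `m` is at least `⌈4(3k + r)/3⌉`, which is its
exponent in `d s t c`; hence `d / (d⁴)₀ ≤ 1 / (s t c)`. Since `d ↦ (s, t, c)` is injective with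
`s, t, c ≤ d`, the sum is at most the cube of the harmonic number `H_⌊D⌋ ≤ 1 + log D`.
-/

/-- `cube0 n` is the least positive natural number `m` with `n ∣ m ^ 3`. -/
noncomputable def cube0 (n : ℕ) : ℕ := sInf {m : ℕ | 0 < m ∧ n ∣ m ^ 3}

namespace Nat

def mapExponents (g : ℕ → ℕ) (n : ℕ) : ℕ := ∏ p ∈ n.primeFactors, p ^ g (n.factorization p)

lemma mapExponents_pos (g : ℕ → ℕ) (n : ℕ) : 0 < mapExponents g n :=
  Finset.prod_pos fun _ hp => pow_pos (prime_of_mem_primeFactors hp).pos _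

lemma factorization_mapExponents {g : ℕ → ℕ} (hg : g 0 = 0) (n : ℕ) :
    (mapExponents g n).factorization = n.factorization.mapRange g hg := by
  have : mapExponents g n = (n.factorization.mapRange g hg).prod (· ^ ·) := by
    rw [Finsupp.prod_mapRange_index fun _ => pow_zero _]
    rfl
  rw [this]
  exact prod_pow_factorization_eq_self fun p hp =>
    prime_of_mem_primeFactors (support_factorization n ▸ Finsupp.support_mapRange hp)

lemma mapExponents_dvd_self {g : ℕ → ℕ} (hg : ∀ a, g a ≤ a) (n : ℕ) : mapExponents g n ∣ n := by
  rcases eq_or_ne n 0 with rfl | hn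
  · exact dvd_zero _
  rw [← factorization_le_iff_dvd (mapExponents_pos g n).ne' hn,
    factorization_mapExponents (Nat.le_zero.mp (hg 0))]
  exact fun p => hg _

end Nat

def residueOnePart (d : ℕ) : ℕ := Nat.mapExponents (fun a => if a % 3 = 1 then 1 else 0) d

def residueTwoPart (d : ℕ) : ℕ := Nat.mapExponents (fun a => if a % 3 = 2 then 1 else 0) d

def cubeRootPart (d : ℕ) : ℕ := Nat.mapExponents (· / 3) d

lemma residueOnePart_pos (d : ℕ) : 0 < residueOnePart d := Nat.mapExponents_pos _ _

lemma residueTwoPart_pos (d : ℕ) : 0 < residueTwoPart d := Nat.mapExponents_pos _ _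

lemma cubeRootPart_pos (d : ℕ) : 0 < cubeRootPart d := Nat.mapExponents_pos _ _

lemma factorization_residueOnePart (d p : ℕ) :
    (residueOnePart d).factorization p = if d.factorization p % 3 = 1 then 1 else 0 := by
  simp [residueOnePart, Nat.factorization_mapExponents]

lemma factorization_residueTwoPart (d p : ℕ) :
    (residueTwoPart d).factorization p = if d.factorization p % 3 = 2 then 1 else 0 := by
  simp [residueTwoPart, Nat.factorization_mapExponents]

lemma factorization_cubeRootPart (d p : ℕ) :
    (cubeRootPart d).factorization p = d.factorization p / 3 := by
  simp [cubeRootPart, Nat.factorization_mapExponents]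

lemma residueOnePart_mul_residueTwoPart_sq_mul_cubeRootPart_pow_three {d : ℕ} (hd : d ≠ 0) :
    residueOnePart d * residueTwoPart d ^ 2 * cubeRootPart d ^ 3 = d := by
  have h₁ := (residueOnePart_pos d).ne'
  have h₂ := (residueTwoPart_pos d).ne'
  have h₃ := (cubeRootPart_pos d).ne'
  refine Nat.eq_of_factorization_eq (by positivity) hd fun p => ?_
  rw [Nat.factorization_mul (by positivity) (by positivity),
    Nat.factorization_mul h₁ (by positivity)]
  simp only [Finsupp.add_apply, Nat.factorization_pow, Finsupp.smul_apply, smul_eq_mul,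
    factorization_residueOnePart, factorization_residueTwoPart, factorization_cubeRootPart]
  split_ifs <;> omega

lemma mul_residueOnePart_mul_residueTwoPart_mul_cubeRootPart_dvd {d m : ℕ} (hd : d ≠ 0)
    (hm : m ≠ 0) (h : d ^ 4 ∣ m ^ 3) :
    d * (residueOnePart d * residueTwoPart d * cubeRootPart d) ∣ m := by
  have h₁ := (residueOnePart_pos d).ne'
  have h₂ := (residueTwoPart_pos d).ne'
  have h₃ := (cubeRootPart_pos d).ne'
  rw [← Nat.factorization_le_iff_dvd (by positivity) (by positivity)] at h
  rw [← Nat.factorization_le_iff_dvd (by positivity) hm]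
  intro p
  have hp := h p
  rw [Nat.factorization_mul hd (by positivity), Nat.factorization_mul (by positivity) h₃,
    Nat.factorization_mul h₁ h₂]
  simp only [Finsupp.add_apply, Nat.factorization_pow, Finsupp.smul_apply, smul_eq_mul,
    factorization_residueOnePart, factorization_residueTwoPart, factorization_cubeRootPart] at hp ⊢
  split_ifs <;> omega

def cubeParts (d : ℕ) : ℕ × ℕ × ℕ := (residueOnePart d, residueTwoPart d, cubeRootPart d)

lemma cubeParts_injOn : Set.InjOn cubeParts {d | d ≠ 0} := fun x hx y hy hxy => by
  simp only [cubeParts, Prod.mk.injEq] at hxy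
  rw [← residueOnePart_mul_residueTwoPart_sq_mul_cubeRootPart_pow_three hx,
    ← residueOnePart_mul_residueTwoPart_sq_mul_cubeRootPart_pow_three hy, hxy.1, hxy.2.1, hxy.2.2]

lemma cubeParts_mem_Icc {d N : ℕ} (hd : d ∈ Finset.Icc 1 N) :
    cubeParts d ∈ Finset.Icc 1 N ×ˢ Finset.Icc 1 N ×ˢ Finset.Icc 1 N := by
  rw [Finset.mem_Icc] at hd
  have hmem {k : ℕ} (hk : k ∣ d) : k ∈ Finset.Icc 1 N := Finset.mem_Icc.mpr
    ⟨Nat.pos_of_dvd_of_pos hk (by omega), (Nat.le_of_dvd (by omega) hk).trans hd.2⟩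
  simp only [cubeParts, Finset.mem_product]
  exact ⟨hmem (Nat.mapExponents_dvd_self (fun _ => by split_ifs <;> omega) d),
    hmem (Nat.mapExponents_dvd_self (fun _ => by split_ifs <;> omega) d),
    hmem (Nat.mapExponents_dvd_self (fun a => Nat.div_le_self a 3) d)⟩

lemma cube0_mem {n : ℕ} (hn : n ≠ 0) : 0 < cube0 n ∧ n ∣ cube0 n ^ 3 :=
  Nat.sInf_mem (s := {m | 0 < m ∧ n ∣ m ^ 3}) ⟨n ^ 2, by positivity, Dvd.intro (n ^ 5) (by ring)⟩

lemma div_cube0_pow_four_le {d : ℕ} (hd : d ≠ 0) :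
    (d : ℝ) / cube0 (d ^ 4) ≤ ((cubeParts d).1 * (cubeParts d).2.1 * (cubeParts d).2.2 : ℝ)⁻¹ := by
  obtain ⟨hm, hdvd⟩ := cube0_mem (pow_ne_zero 4 hd)
  have hle := Nat.le_of_dvd hm
    (mul_residueOnePart_mul_residueTwoPart_mul_cubeRootPart_dvd hd hm.ne' hdvd)
  have := residueOnePart_pos d
  have := residueTwoPart_pos d
  have := cubeRootPart_pos d
  rw [div_le_iff₀ (by exact_mod_cast hm), inv_mul_eq_div,
    le_div_iff₀ (by simp only [cubeParts]; positivity)]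
  exact_mod_cast hle

lemma sum_inv_mul_le_harmonic_pow_three {f : ℕ → ℕ × ℕ × ℕ} {N : ℕ}
    (hinj : Set.InjOn f (Finset.Icc 1 N))
    (hmaps : ∀ d ∈ Finset.Icc 1 N, f d ∈ Finset.Icc 1 N ×ˢ Finset.Icc 1 N ×ˢ Finset.Icc 1 N) :
    ∑ d ∈ Finset.Icc 1 N, ((f d).1 * (f d).2.1 * (f d).2.2 : ℝ)⁻¹ ≤ harmonic N ^ 3 := by
  set A := Finset.Icc 1 N
  let g (x : ℕ × ℕ × ℕ) : ℝ := ((x.1 : ℝ) * x.2.1 * x.2.2)⁻¹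
  calc ∑ d ∈ A, g (f d) = ∑ x ∈ A.image f, g x := (Finset.sum_image hinj).symm
    _ ≤ ∑ x ∈ A ×ˢ A ×ˢ A, g x :=
      Finset.sum_le_sum_of_subset_of_nonneg (Finset.image_subset_iff.mpr hmaps)
        fun _ _ _ => by positivity
    _ = harmonic N ^ 3 := by
      simp only [g, harmonic_eq_sum_Icc, Finset.sum_product, mul_inv]
      push_cast
      rw [pow_three, Finset.sum_mul_sum, Finset.sum_mul_sum]
      simp only [Finset.mul_sum, mul_assoc, A]

lemma one_add_log_le_mul_rpow {x δ : ℝ} (hx : 1 ≤ x) (hδ : 0 < δ) :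
    1 + Real.log x ≤ (1 + δ⁻¹) * x ^ δ := by
  have hlog := Real.log_le_rpow_div (zero_le_one.trans hx) hδ
  have hpow := Real.one_le_rpow hx hδ.le
  rw [div_eq_mul_inv] at hlog
  linarith

theorem sum_d_div_cube0_d4 :
    ∀ ε : ℝ, 0 < ε → ∃ C : ℝ, 0 < C ∧ ∀ D : ℝ, 1 ≤ D →
      ∑ d ∈ Finset.Icc 1 ⌊D⌋₊, (d : ℝ) / (cube0 (d ^ 4) : ℝ) ≤ C * D ^ ε := by
  intro ε hε
  refine ⟨(1 + (ε / 3)⁻¹) ^ 3, by positivity, fun D hD => ?_⟩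
  have hpos {d : ℕ} (hd : d ∈ Finset.Icc 1 ⌊D⌋₊) : d ≠ 0 := by
    rw [Finset.mem_Icc] at hd; omega
  have hlog : 0 ≤ 1 + Real.log D := by linarith [Real.log_nonneg hD]
  calc ∑ d ∈ Finset.Icc 1 ⌊D⌋₊, (d : ℝ) / (cube0 (d ^ 4) : ℝ)
      ≤ ∑ d ∈ Finset.Icc 1 ⌊D⌋₊,
          ((cubeParts d).1 * (cubeParts d).2.1 * (cubeParts d).2.2 : ℝ)⁻¹ :=
        Finset.sum_le_sum fun d hd => div_cube0_pow_four_le (hpos hd)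
    _ ≤ harmonic ⌊D⌋₊ ^ 3 :=
        sum_inv_mul_le_harmonic_pow_three (cubeParts_injOn.mono fun _ hd => hpos hd)
          fun _ => cubeParts_mem_Icc
    _ ≤ (1 + Real.log D) ^ 3 :=
        pow_le_pow_left₀ (by unfold harmonic; positivity) (harmonic_floor_le_one_add_log D hD) 3
    _ ≤ ((1 + (ε / 3)⁻¹) * D ^ (ε / 3)) ^ 3 := by
        gcongr
        exact one_add_log_le_mul_rpow hD (by positivity)
    _ = (1 + (ε / 3)⁻¹) ^ 3 * D ^ ε := by
        rw [mul_pow, ← Real.rpow_natCast (D ^ (ε / 3)), ← Real.rpow_mul (by linarith)]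
        norm_num
end

section
/- For every ε > 0, ∑_{d ≤ D} 1/√(d') ≪ D^{1/2+ε}, where d' denotes the least natural number m with d | m². -/
/-- `sq0 d` is the least positive natural number `m` with `d ∣ m ^ 2`. -/
noncomputable def sq0 (d : ℕ) : ℕ := sInf {m : ℕ | 0 < m ∧ d ∣ m ^ 2}

/-- squarefree part -/
noncomputable def sfp (d : ℕ) : ℕ := (Nat.sq_mul_squarefree d).choose

/-- square part root -/
noncomputable def sqp (d : ℕ) : ℕ := (Nat.sq_mul_squarefree d).choose_spec.choose

lemma sfp_spec (d : ℕ) : sqp d ^ 2 * sfp d = d ∧ Squarefree (sfp d) :=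
  (Nat.sq_mul_squarefree d).choose_spec.choose_spec

lemma sfp_pos {d : ℕ} (hd : 1 ≤ d) : 1 ≤ sfp d := by
  rcases Nat.eq_zero_or_pos (sfp d) with h | h
  · exfalso; have := (sfp_spec d).1; rw [h, mul_zero] at this; omega
  · exact h

lemma sqp_pos {d : ℕ} (hd : 1 ≤ d) : 1 ≤ sqp d := by
  rcases Nat.eq_zero_or_pos (sqp d) with h | h
  · exfalso; have := (sfp_spec d).1; rw [h] at this; simp at this; omega
  · exact h

lemma sq0_mem {d : ℕ} (hd : 1 ≤ d) : 0 < sq0 d ∧ d ∣ sq0 d ^ 2 := by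
  have hne : {m : ℕ | 0 < m ∧ d ∣ m ^ 2}.Nonempty :=
    ⟨d, hd, by rw [sq]; exact Dvd.intro d rfl⟩
  exact Nat.sInf_mem hne

/-- key lemma : `sq0 d ≥ s * t` where `d = t ^ 2 * s`, `s` squarefree -/
lemma key {d : ℕ} (hd : 1 ≤ d) : sfp d * sqp d ≤ sq0 d := by
  obtain ⟨hm, hdvd⟩ := sq0_mem hd
  obtain ⟨heq, hsq⟩ := sfp_spec d
  set s := sfp d; set t := sqp d; set m := sq0 d
  have ht : 1 ≤ t := sqp_pos hd
  have htd : t ^ 2 ∣ d := ⟨s, heq.symm⟩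
  have htm : t ∣ m := by
    rw [← Nat.pow_dvd_pow_iff (two_ne_zero)]
    exact dvd_trans htd hdvd
  obtain ⟨u, hu⟩ := htm
  have hu0 : 0 < u := by
    rcases Nat.eq_zero_or_pos u with h | h
    · exfalso; rw [h, mul_zero] at hu; omega
    · exact h
  have hsu : s ∣ u ^ 2 := by
    have h1 : t ^ 2 * s ∣ t ^ 2 * u ^ 2 := by
      rw [heq, ← mul_pow, ← hu]; exact hdvd
    exact (mul_dvd_mul_iff_left (by positivity : (t : ℕ) ^ 2 ≠ 0)).mp h1
  have hsdvd : s ∣ u := (hsq.dvd_pow_iff_dvd two_ne_zero).mp hsu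
  have hsle : s ≤ u := Nat.le_of_dvd hu0 hsdvd
  calc s * t ≤ u * t := Nat.mul_le_mul_right t hsle
    _ = m := by rw [hu, mul_comm]

lemma sum_inv_sqrt_le (N : ℕ) : ∑ s ∈ Finset.Icc 1 N, 1 / Real.sqrt s ≤ 2 * Real.sqrt N := by
  induction N with
  | zero => simp
  | succ n ih =>
    rw [Finset.sum_Icc_succ_top (by omega)]
    have ha : Real.sqrt n ^ 2 = n := Real.sq_sqrt (by positivity)
    have hb : Real.sqrt ((n : ℝ) + 1) ^ 2 = (n : ℝ) + 1 := Real.sq_sqrt (by positivity)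
    have hb0 : 0 < Real.sqrt ((n : ℝ) + 1) := Real.sqrt_pos.mpr (by positivity)
    have ha0 : 0 ≤ Real.sqrt n := Real.sqrt_nonneg _
    have hstep : 1 / Real.sqrt ((n : ℝ) + 1) ≤
        2 * Real.sqrt ((n : ℝ) + 1) - 2 * Real.sqrt n := by
      rw [div_le_iff₀ hb0]
      nlinarith [sq_nonneg (Real.sqrt ((n : ℝ) + 1) - Real.sqrt n)]
    have hcast : ((n + 1 : ℕ) : ℝ) = (n : ℝ) + 1 := by push_cast; ring
    rw [hcast]
    linarith [ih]

lemma sum_inv_pow32_le (N : ℕ) : ∑ t ∈ Finset.Icc 1 N, 1 / ((t : ℝ) * Real.sqrt t) ≤ 3 := by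
  have main : ∀ M : ℕ, 1 ≤ M →
      ∑ t ∈ Finset.Icc 1 M, 1 / ((t : ℝ) * Real.sqrt t) ≤ 3 - 2 / Real.sqrt M := by
    intro M hM
    induction M with
    | zero => omega
    | succ n ih =>
      rcases Nat.eq_zero_or_pos n with h0 | h0
      · subst h0; norm_num
      · rw [Finset.sum_Icc_succ_top (by omega)]
        have ha : Real.sqrt n ^ 2 = n := Real.sq_sqrt (by positivity)
        have hb : Real.sqrt ((n : ℝ) + 1) ^ 2 = (n : ℝ) + 1 := Real.sq_sqrt (by positivity)
        have hb0 : 0 < Real.sqrt ((n : ℝ) + 1) := Real.sqrt_pos.mpr (by positivity)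
        have ha0 : 0 < Real.sqrt n := Real.sqrt_pos.mpr (by exact_mod_cast h0)
        have hab : Real.sqrt n ≤ Real.sqrt ((n : ℝ) + 1) := Real.sqrt_le_sqrt (by linarith)
        have hstep : 1 / (((n : ℝ) + 1) * Real.sqrt ((n : ℝ) + 1)) ≤
            2 / Real.sqrt n - 2 / Real.sqrt ((n : ℝ) + 1) := by
          rw [div_sub_div _ _ (ne_of_gt ha0) (ne_of_gt hb0),
            div_le_div_iff₀ (by positivity) (by positivity)]
          nlinarith [mul_pos ha0 hb0, sq_nonneg (Real.sqrt ((n : ℝ) + 1) - Real.sqrt n),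
            mul_pos (mul_pos ha0 hb0) hb0]
        have hcast : ((n + 1 : ℕ) : ℝ) = (n : ℝ) + 1 := by push_cast; ring
        have ihn := ih h0
        rw [hcast]
        linarith
  rcases Nat.eq_zero_or_pos N with h | h
  · subst h; simp
  · have := main N h
    have h2 : 0 < 2 / Real.sqrt N := by
      have : 0 < Real.sqrt N := Real.sqrt_pos.mpr (by exact_mod_cast h)
      positivity
    linarith

lemma cast_div_le_real (a b : ℕ) (hb : 0 < b) : ((a / b : ℕ) : ℝ) ≤ (a : ℝ) / b := by
  rw [le_div_iff₀ (by exact_mod_cast hb)]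
  exact_mod_cast Nat.div_mul_le_self a b

theorem sum_inv_sqrt_dprime :
    ∀ ε : ℝ, 0 < ε → ∃ C : ℝ, 0 < C ∧ ∀ D : ℝ, 1 ≤ D →
      ∑ d ∈ Finset.Icc 1 ⌊D⌋₊, 1 / Real.sqrt (sq0 d) ≤ C * D ^ (1 / 2 + ε) := by
  intro ε hε
  refine ⟨6, by norm_num, ?_⟩
  intro D hD
  set N := ⌊D⌋₊ with hNdef
  set Q : Finset (Σ _ : ℕ, ℕ) := (Finset.Icc 1 N).sigma (fun t => Finset.Icc 1 (N / t ^ 2))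
    with hQ
  set f : (Σ _ : ℕ, ℕ) → ℝ := fun p => 1 / Real.sqrt p.1 * (1 / Real.sqrt p.2) with hf
  have hfnn : ∀ p, 0 ≤ f p := by
    intro p
    have := Real.sqrt_nonneg (p.1 : ℝ); have := Real.sqrt_nonneg (p.2 : ℝ)
    positivity
  set i : ℕ → (Σ _ : ℕ, ℕ) := fun d => ⟨sqp d, sfp d⟩ with hi
  have hinj : Set.InjOn i (Finset.Icc 1 N : Set ℕ) := by
    intro d _ e _ h
    have h1 := (sfp_spec d).1
    have h2 := (sfp_spec e).1
    obtain ⟨ht, hs⟩ := Sigma.mk.inj_iff.mp h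
    rw [← h1, ← h2, ht, eq_of_heq hs]
  have hmaps : ∀ d ∈ Finset.Icc 1 N, i d ∈ Q := by
    intro d hd
    simp only [Finset.mem_Icc] at hd
    obtain ⟨heq, _⟩ := sfp_spec d
    have ht1 : 1 ≤ sqp d := sqp_pos hd.1
    have hs1 : 1 ≤ sfp d := sfp_pos hd.1
    rw [hQ, Finset.mem_sigma, Finset.mem_Icc, Finset.mem_Icc]
    refine ⟨⟨ht1, ?_⟩, hs1, ?_⟩
    · calc sqp d ≤ sqp d ^ 2 * sfp d := by nlinarith
        _ = d := heq
        _ ≤ N := hd.2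
    · rw [Nat.le_div_iff_mul_le (by positivity)]
      calc sfp d * sqp d ^ 2 = sqp d ^ 2 * sfp d := mul_comm _ _
        _ = d := heq
        _ ≤ N := hd.2
  have step1 : ∑ d ∈ Finset.Icc 1 N, 1 / Real.sqrt (sq0 d) ≤ ∑ p ∈ Q, f p := by
    calc ∑ d ∈ Finset.Icc 1 N, 1 / Real.sqrt (sq0 d)
        ≤ ∑ d ∈ Finset.Icc 1 N, f (i d) := by
          apply Finset.sum_le_sum
          intro d hd
          simp only [Finset.mem_Icc] at hd
          have hk := key hd.1
          have hs1 : 1 ≤ sfp d := sfp_pos hd.1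
          have ht1 : 1 ≤ sqp d := sqp_pos hd.1
          have hst : (0 : ℝ) < (sqp d : ℝ) * sfp d := by positivity
          have hfval : f (i d) = 1 / Real.sqrt ((sqp d : ℝ) * sfp d) := by
            rw [hf, hi]
            simp only
            rw [Real.sqrt_mul (by positivity), one_div_mul_one_div]
          rw [hfval]
          apply one_div_le_one_div_of_le
          · exact Real.sqrt_pos.mpr hst
          · apply Real.sqrt_le_sqrt
            have : (sqp d : ℝ) * sfp d = ((sfp d * sqp d : ℕ) : ℝ) := by push_cast; ring
            rw [this]
            exact_mod_cast hk
      _ = ∑ p ∈ (Finset.Icc 1 N).image i, f p := (Finset.sum_image (fun a ha b hb h =>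
            hinj (by exact_mod_cast ha) (by exact_mod_cast hb) h)).symm
      _ ≤ ∑ p ∈ Q, f p := by
          apply Finset.sum_le_sum_of_subset_of_nonneg
          · intro p hp
            obtain ⟨d, hd, rfl⟩ := Finset.mem_image.mp hp
            exact hmaps d hd
          · intro p _ _; exact hfnn p
  have hN0 : (0 : ℝ) ≤ (N : ℝ) := by positivity
  have step2 : ∑ p ∈ Q, f p ≤ 6 * Real.sqrt N := by
    rw [hQ, Finset.sum_sigma]
    have inner : ∀ t ∈ Finset.Icc 1 N,
        ∑ s ∈ Finset.Icc 1 (N / t ^ 2), f ⟨t, s⟩ ≤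
          2 * Real.sqrt N * (1 / ((t : ℝ) * Real.sqrt t)) := by
      intro t ht
      simp only [Finset.mem_Icc] at ht
      have ht0 : (0 : ℝ) < (t : ℝ) := by exact_mod_cast ht.1
      have hsqt : 0 < Real.sqrt t := Real.sqrt_pos.mpr ht0
      have : ∑ s ∈ Finset.Icc 1 (N / t ^ 2), f ⟨t, s⟩ =
          1 / Real.sqrt t * ∑ s ∈ Finset.Icc 1 (N / t ^ 2), 1 / Real.sqrt s := by
        rw [Finset.mul_sum]
      rw [this]
      have h1 : ∑ s ∈ Finset.Icc 1 (N / t ^ 2), 1 / Real.sqrt s ≤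
          2 * Real.sqrt ((N / t ^ 2 : ℕ) : ℝ) := sum_inv_sqrt_le _
      have h2 : Real.sqrt ((N / t ^ 2 : ℕ) : ℝ) ≤ Real.sqrt N / t := by
        have hle : ((N / t ^ 2 : ℕ) : ℝ) ≤ (N : ℝ) / (t : ℝ) ^ 2 := by
          have := cast_div_le_real N (t ^ 2) (pow_pos ht.1 2)
          push_cast at this ⊢
          exact this
        calc Real.sqrt ((N / t ^ 2 : ℕ) : ℝ) ≤ Real.sqrt ((N : ℝ) / (t : ℝ) ^ 2) :=
              Real.sqrt_le_sqrt hle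
          _ = Real.sqrt N / t := by
              rw [Real.sqrt_div hN0, Real.sqrt_sq (le_of_lt ht0)]
      calc 1 / Real.sqrt t * ∑ s ∈ Finset.Icc 1 (N / t ^ 2), 1 / Real.sqrt s
          ≤ 1 / Real.sqrt t * (2 * (Real.sqrt N / t)) := by
            apply mul_le_mul_of_nonneg_left _ (by positivity)
            calc ∑ s ∈ Finset.Icc 1 (N / t ^ 2), 1 / Real.sqrt s
                ≤ 2 * Real.sqrt ((N / t ^ 2 : ℕ) : ℝ) := h1
              _ ≤ 2 * (Real.sqrt N / t) := by linarith
        _ = 2 * Real.sqrt N * (1 / ((t : ℝ) * Real.sqrt t)) := by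
            have h3 : Real.sqrt (t : ℝ) ≠ 0 := ne_of_gt hsqt
            have h4 : (t : ℝ) ≠ 0 := ne_of_gt ht0
            field_simp
            try ring
            try exact Or.inl trivial
    calc ∑ t ∈ Finset.Icc 1 N, ∑ s ∈ Finset.Icc 1 (N / t ^ 2), f ⟨t, s⟩
        ≤ ∑ t ∈ Finset.Icc 1 N, 2 * Real.sqrt N * (1 / ((t : ℝ) * Real.sqrt t)) :=
          Finset.sum_le_sum inner
      _ = 2 * Real.sqrt N * ∑ t ∈ Finset.Icc 1 N, 1 / ((t : ℝ) * Real.sqrt t) := by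
          rw [Finset.mul_sum]
      _ ≤ 2 * Real.sqrt N * 3 := by
          apply mul_le_mul_of_nonneg_left (sum_inv_pow32_le N) (by positivity)
      _ = 6 * Real.sqrt N := by ring
  have step3 : (6 : ℝ) * Real.sqrt N ≤ 6 * D ^ ((1 : ℝ) / 2 + ε) := by
    have hND : (N : ℝ) ≤ D := Nat.floor_le (by linarith)
    have h1 : Real.sqrt N ≤ Real.sqrt D := Real.sqrt_le_sqrt hND
    have h2 : Real.sqrt D = D ^ ((1 : ℝ) / 2) := Real.sqrt_eq_rpow D
    have h3 : D ^ ((1 : ℝ) / 2) ≤ D ^ ((1 : ℝ) / 2 + ε) :=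
      Real.rpow_le_rpow_of_exponent_le hD (by linarith)
    linarith
  calc ∑ d ∈ Finset.Icc 1 N, 1 / Real.sqrt (sq0 d) ≤ ∑ p ∈ Q, f p := step1
    _ ≤ 6 * Real.sqrt N := step2
    _ ≤ 6 * D ^ (1 / 2 + ε) := step3
end

section
/- If m₁, m₂, q are natural numbers with m₁ m₂ = q², then √(m₁)/(m₁²)₀ · √(m₂)/(m₂²)₀ ≤ q/(q⁴)₀, where n₀ denotes the least natural number m with n | m³. -/
lemma cube0_spec (n : ℕ) (hn : 0 < n) : 0 < cube0 n ∧ n ∣ (cube0 n) ^ 3 := by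
  have h : cube0 n ∈ {m : ℕ | 0 < m ∧ n ∣ m ^ 3} :=
    Nat.sInf_mem ⟨n, hn, dvd_pow_self n (by norm_num)⟩
  exact h

lemma cube0_le (n m : ℕ) (hm : 0 < m) (hd : n ∣ m ^ 3) : cube0 n ≤ m :=
  Nat.sInf_le (show m ∈ {m : ℕ | 0 < m ∧ n ∣ m ^ 3} from ⟨hm, hd⟩)

theorem cube0_ineq_of_square
    (m₁ m₂ q : ℕ) (hm₁ : 0 < m₁) (hm₂ : 0 < m₂) (h : m₁ * m₂ = q ^ 2) :
    Real.sqrt m₁ / (cube0 (m₁ ^ 2) : ℝ) * (Real.sqrt m₂ / (cube0 (m₂ ^ 2) : ℝ))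
      ≤ (q : ℝ) / (cube0 (q ^ 4) : ℝ) := by
  have hq : 0 < q := by
    rcases Nat.eq_zero_or_pos q with hq0 | hq0
    · exfalso; rw [hq0] at h; simp at h; omega
    · exact hq0
  obtain ⟨ha, hda⟩ := cube0_spec (m₁ ^ 2) (by positivity)
  obtain ⟨hb, hdb⟩ := cube0_spec (m₂ ^ 2) (by positivity)
  obtain ⟨hc, hdc⟩ := cube0_spec (q ^ 4) (by positivity)
  set a := cube0 (m₁ ^ 2)
  set b := cube0 (m₂ ^ 2)
  have hab : q ^ 4 ∣ (a * b) ^ 3 := by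
    have : q ^ 4 = m₁ ^ 2 * m₂ ^ 2 := by
      have : (m₁ * m₂) ^ 2 = (q ^ 2) ^ 2 := by rw [h]
      ring_nf at this ⊢; linarith
    rw [this, mul_pow]
    exact mul_dvd_mul hda hdb
  have hle : cube0 (q ^ 4) ≤ a * b := cube0_le _ _ (by positivity) hab
  have hsqrt : Real.sqrt m₁ * Real.sqrt m₂ = (q : ℝ) := by
    rw [← Real.sqrt_mul (by positivity), ← Nat.cast_mul, h]
    push_cast
    rw [Real.sqrt_sq (by positivity)]
  have hLHS : Real.sqrt m₁ / (a : ℝ) * (Real.sqrt m₂ / (b : ℝ))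
      = (q : ℝ) / ((a : ℝ) * b) := by
    rw [div_mul_div_comm, hsqrt]
  rw [hLHS]
  apply div_le_div_of_nonneg_left (by positivity) (by exact_mod_cast hc)
  exact_mod_cast hle
end
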